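/- Let $g,f_1,f_2,h:\mathbb{R}^d\to\mathbb{R}$ with $g,f_1,f_2$ convex, $f_1,h$ differentiable, $h$ convex, and suppose $Lh-f_1$ is convex for some $L>0$. Fix $\lambda>0$, points $x^{k-1},x^k\in\mathbb{R}^d$, $\beta_k\in[0,1)$, set $y^k=x^k+\beta_k(x^k-x^{k-1})$, let $\xi^k\in\partial f_2(x^k)$, and let $x^{k+1}$ be a global minimizer of $y\mapsto g(y)+\langle\nabla f_1(y^k)-\xi^k,y-y^k\rangle+\frac{1}{\lambda}D_h(y,y^k)$. Then $\lambda\Psi(x^{k+1})\leq\lambda\Psi(x^k)+D_h(x^k,y^k)-D_h(x^k,x^{k+1})-(1-\lambda L)D_h(x^{k+1},y^k)$, where $\Psi=f_1-f_2+g$. -/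

import Mathlib

/-!
By minimality of `xkp`, the vector `-(∇f₁ yk - ξk) - λ⁻¹ (∇h xkp - ∇h yk)` is a subgradient of `g`
at `xkp`; together with the three-point identity of the Bregman distance this is the three-point
inequality at `xk`. Add to it the gradient inequality of the convex `f₁` at `yk`, the descent bound
`f₁ xkp ≤ f₁ yk + ⟪∇f₁ yk, xkp - yk⟫ + L D_h(xkp, yk)` given by the convexity of `L h - f₁`, and the
subgradient inequality of `f₂` at `xk`: all inner products cancel.
-/

open RealInnerProductSpace

open Filter Set Topology

section NormedSpace

variable {E : Type*} [NormedAddCommGroup E] [NormedSpace ℝ E]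

lemma ConvexOn.slope_le_sub {G : E → ℝ} (hG : ConvexOn ℝ univ G) (x y : E) {t : ℝ}
    (ht₀ : 0 < t) (ht₁ : t ≤ 1) :
    t⁻¹ * (G (x + t • (y - x)) - G x) ≤ G y - G x := by
  have hseg := hG.2 (mem_univ x) (mem_univ y) (sub_nonneg.2 ht₁) ht₀.le (sub_add_cancel 1 t)
  rw [show (1 - t) • x + t • y = x + t • (y - x) by module, smul_eq_mul, smul_eq_mul] at hseg
  rw [inv_mul_le_iff₀ ht₀]
  linarith

-- At a minimizer of `G + k`, the slopes of `-k` along `[x, y]` are slopes of `G`, hence at most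
-- `G y - G x`; in the limit `-k'` is a subgradient of `G`.
lemma ConvexOn.sub_le_of_isMinOn_add {G k : E → ℝ} {k' : E →L[ℝ] ℝ} {x : E}
    (hG : ConvexOn ℝ univ G) (hk : HasFDerivAt k k' x) (hmin : IsMinOn (G + k) univ x)
    (y : E) : G x - k' (y - x) ≤ G y := by
  have hslope := ((hk.hasLineDerivAt (y - x)).tendsto_slope_zero_right).neg
  have hbound : ∀ᶠ t in 𝓝[>] (0 : ℝ), -(t⁻¹ • (k (x + t • (y - x)) - k x)) ≤ G y - G x := by
    filter_upwards [Ioc_mem_nhdsGT (zero_lt_one' ℝ)] with t ⟨ht₀, ht₁⟩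
    have hx := isMinOn_univ_iff.1 hmin (x + t • (y - x))
    simp only [Pi.add_apply] at hx
    refine le_trans ?_ (hG.slope_le_sub x y ht₀ ht₁)
    rw [smul_eq_mul, ← mul_neg]
    exact mul_le_mul_of_nonneg_left (by linarith) (inv_nonneg.2 ht₀.le)
  linarith [le_of_tendsto hslope hbound]

lemma ConvexOn.add_le_of_hasFDerivAt {φ : E → ℝ} {φ' : E →L[ℝ] ℝ} {x : E}
    (hφ : ConvexOn ℝ univ φ) (hφ' : HasFDerivAt φ φ' x) (y : E) : φ x + φ' (y - x) ≤ φ y := by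
  have hmin : IsMinOn (φ + -φ) univ x := by
    rw [add_neg_cancel]
    exact isMinOn_const
  have h := hφ.sub_le_of_isMinOn_add hφ'.neg hmin y
  rwa [neg_apply, sub_neg_eq_add] at h

end NormedSpace

section InnerProductSpace

variable {F : Type*} [NormedAddCommGroup F] [InnerProductSpace ℝ F]

def bregmanDiv (h : F → ℝ) (h' : F → F) (x y : F) : ℝ := h x - h y - ⟪h' y, x - y⟫

lemma bregmanDiv_three_point (h : F → ℝ) (h' : F → F) (x y z : F) :
    bregmanDiv h h' x z - bregmanDiv h h' y z - bregmanDiv h h' x y = ⟪h' y - h' z, x - y⟫ := by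
  simp only [bregmanDiv, inner_sub_left, inner_sub_right]
  ring

variable [CompleteSpace F]

lemma ConvexOn.add_inner_le_of_hasGradientAt {φ : F → ℝ} {φ' x : F}
    (hφ : ConvexOn ℝ univ φ) (hφ' : HasGradientAt φ φ' x) (y : F) : φ x + ⟪φ', y - x⟫ ≤ φ y := by
  simpa using hφ.add_le_of_hasFDerivAt hφ'.hasFDerivAt y

lemma bregmanDiv_prox_three_point {g h : F → ℝ} {h' : F → F} {c z x : F} {μ : ℝ}
    (hg : ConvexOn ℝ univ g) (hh : HasGradientAt h (h' x) x)
    (hmin : ∀ y, g x + ⟪c, x - z⟫ + μ * bregmanDiv h h' x z ≤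
      g y + ⟪c, y - z⟫ + μ * bregmanDiv h h' y z) (y : F) :
    g x + ⟪c, x - z⟫ + μ * bregmanDiv h h' x z + μ * bregmanDiv h h' y x ≤
      g y + ⟪c, y - z⟫ + μ * bregmanDiv h h' y z := by
  have hk := ((hasFDerivAt_const c x).inner ℝ ((hasFDerivAt_id x).sub_const z)).add
    (((hh.hasFDerivAt.sub_const (h z)).sub
      ((hasFDerivAt_const (h' z) x).inner ℝ ((hasFDerivAt_id x).sub_const z))).const_mul μ)
  have hsub := hg.sub_le_of_isMinOn_add hk (isMinOn_univ_iff.2 fun y ↦ by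
    simpa only [Pi.add_apply, Pi.sub_apply, id, bregmanDiv, add_assoc] using hmin y) y
  simp only [id_eq, add_apply, ContinuousLinearMap.comp_apply, ContinuousLinearMap.prod_apply,
    zero_apply, ContinuousLinearMap.id_apply, fderivInnerCLM_apply, inner_zero_left, add_zero,
    smul_apply, sub_apply, InnerProductSpace.toDual_apply_apply, smul_eq_mul] at hsub
  have h3 := bregmanDiv_three_point h h' y x z
  have hc : ⟪c, y - z⟫ = ⟪c, x - z⟫ + ⟪c, y - x⟫ := by rw [← inner_add_right, sub_add_sub_cancel']
  rw [inner_sub_left] at h3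
  linear_combination hsub - μ * h3 - hc

lemma le_add_inner_add_mul_bregmanDiv_of_convexOn {f h : F → ℝ} {f' h' : F → F} {L : ℝ} {x : F}
    (hf : HasGradientAt f (f' x) x) (hh : HasGradientAt h (h' x) x)
    (hLhf : ConvexOn ℝ univ (fun y ↦ L * h y - f y)) (y : F) :
    f y ≤ f x + ⟪f' x, y - x⟫ + L * bregmanDiv h h' y x := by
  have hfo := hLhf.add_le_of_hasFDerivAt ((hh.hasFDerivAt.const_mul L).sub hf.hasFDerivAt) y
  simp only [sub_apply, smul_apply, InnerProductSpace.toDual_apply_apply, smul_eq_mul] at hfo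
  simp only [bregmanDiv]
  linarith

end InnerProductSpace

theorem bpdcae_decrease_general (d : ℕ)
    (g f₁ f₂ h : EuclideanSpace ℝ (Fin d) → ℝ)
    (f₁' h' : EuclideanSpace ℝ (Fin d) → EuclideanSpace ℝ (Fin d))
    (hf₁ : ∀ x, HasGradientAt f₁ (f₁' x) x)
    (hh : ∀ x, HasGradientAt h (h' x) x)
    (hgconv : ConvexOn ℝ Set.univ g)
    (hf₁conv : ConvexOn ℝ Set.univ f₁)
    (L : ℝ)
    (hsmad : ConvexOn ℝ Set.univ (fun x => L * h x - f₁ x))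
    (D : EuclideanSpace ℝ (Fin d) → EuclideanSpace ℝ (Fin d) → ℝ)
    (hD : ∀ x y, D x y = h x - h y - ⟪h' y, x - y⟫)
    (Ψ : EuclideanSpace ℝ (Fin d) → ℝ)
    (hΨ : ∀ x, Ψ x = f₁ x - f₂ x + g x)
    (lam : ℝ) (hlam : 0 < lam)
    (xk yk ξk xkp : EuclideanSpace ℝ (Fin d))
    (hξk : ∀ y, f₂ y ≥ f₂ xk + ⟪ξk, y - xk⟫)
    (hmin : ∀ y, g xkp + ⟪f₁' yk - ξk, xkp - yk⟫ + (1 / lam) * D xkp yk ≤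
      g y + ⟪f₁' yk - ξk, y - yk⟫ + (1 / lam) * D y yk) :
    lam * Ψ xkp ≤ lam * Ψ xk + D xk yk - D xk xkp - (1 - lam * L) * D xkp yk := by
  obtain rfl : D = bregmanDiv h h' := by
    funext x y
    exact hD x y
  have hprox := bregmanDiv_prox_three_point hgconv (hh xkp) hmin xk
  have hf₁_lower := hf₁conv.add_inner_le_of_hasGradientAt (hf₁ yk) xk
  have hf₁_upper := le_add_inner_add_mul_bregmanDiv_of_convexOn (hf₁ yk) (hh yk) hsmad xkp
  have hf₂_lower := hξk xkp
  have hprox_scaled := mul_le_mul_of_nonneg_left hprox hlam.le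
  simp only [mul_add, ← mul_assoc, mul_one_div_cancel hlam.ne', one_mul] at hprox_scaled
  rw [hΨ, hΨ]
  simp only [inner_sub_left, inner_sub_right, ge_iff_le]
    at hprox_scaled hf₁_lower hf₁_upper hf₂_lower
  linear_combination hprox_scaled + lam * hf₁_lower + lam * hf₁_upper + lam * hf₂_lower

/-- Extrapolation decrease inequality for BPDCAe. -/
theorem bpdcae_decrease (d : ℕ)
    (g f₁ f₂ h : EuclideanSpace ℝ (Fin d) → ℝ)
    (f₁' h' : EuclideanSpace ℝ (Fin d) → EuclideanSpace ℝ (Fin d))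
    (hf₁ : ∀ x, HasGradientAt f₁ (f₁' x) x)
    (hh : ∀ x, HasGradientAt h (h' x) x)
    (hgconv : ConvexOn ℝ Set.univ g)
    (hf₁conv : ConvexOn ℝ Set.univ f₁)
    (hf₂conv : ConvexOn ℝ Set.univ f₂)
    (hhconv : ConvexOn ℝ Set.univ h)
    (L : ℝ) (hL : 0 < L)
    (hsmad : ConvexOn ℝ Set.univ (fun x => L * h x - f₁ x))
    (D : EuclideanSpace ℝ (Fin d) → EuclideanSpace ℝ (Fin d) → ℝ)
    (hD : ∀ x y, D x y = h x - h y - ⟪h' y, x - y⟫)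
    (Ψ : EuclideanSpace ℝ (Fin d) → ℝ)
    (hΨ : ∀ x, Ψ x = f₁ x - f₂ x + g x)
    (lam : ℝ) (hlam : 0 < lam)
    (βk : ℝ) (hβk : 0 ≤ βk) (hβk1 : βk < 1)
    (xkm xk yk ξk xkp : EuclideanSpace ℝ (Fin d))
    (hyk : yk = xk + βk • (xk - xkm))
    (hξk : ∀ y, f₂ y ≥ f₂ xk + ⟪ξk, y - xk⟫)
    (hmin : ∀ y, g xkp + ⟪f₁' yk - ξk, xkp - yk⟫ + (1 / lam) * D xkp yk ≤
      g y + ⟪f₁' yk - ξk, y - yk⟫ + (1 / lam) * D y yk) :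
    lam * Ψ xkp ≤ lam * Ψ xk + D xk yk - D xk xkp - (1 - lam * L) * D xkp yk :=
  bpdcae_decrease_general d g f₁ f₂ h f₁' h' hf₁ hh hgconv hf₁conv L hsmad D hD Ψ hΨ lam hlam xk yk
    ξk xkp hξk hmin
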